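/- Let s ∈ (0,1] satisfy −ψ'(s) = 4δ for some δ ≥ 0, where ψ'(t) = 2t − 1/t³ − (1/t²)e^{1/t−1}. Then s ≥ 1/(1 + log(4δ + 1)). -/
import Mathlib


noncomputable def psi' (t : ℝ) : ℝ := 2*t - 1/t^3 - (1/t^2) * Real.exp (1/t - 1)

theorem stmt_15 (s δ : ℝ) (hs : s ∈ Set.Ioc (0:ℝ) 1) (hδ : 0 ≤ δ)
    (h : -psi' s = 4 * δ) :
    s ≥ 1 / (1 + Real.log (4 * δ + 1)) := by
  obtain ⟨hs0, hs1⟩ := hs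
  have h1 : (1:ℝ) ≤ 1/s := by rw [le_div_iff₀ hs0]; linarith
  have hs3 : (1:ℝ) ≤ 1/s^3 := by rw [le_div_iff₀ (by positivity)]; nlinarith [mul_pos hs0 hs0, sq_nonneg (1-s)]
  have h4 : 4*δ = 1/s^3 + (1/s^2) * Real.exp (1/s-1) - 2*s := by
    unfold psi' at h; linarith
  have hEpos : 0 < Real.exp (1/s-1) := Real.exp_pos _
  have hE : Real.exp (1/s - 1) ≤ 4*δ + 1 := by
    have h2 : (1:ℝ) ≤ 1/s^2 := by rw [le_div_iff₀ (by positivity)]; nlinarith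
    nlinarith
  have hlog : 1/s - 1 ≤ Real.log (4*δ+1) := by
    rw [← Real.log_exp (1/s-1)]
    exact Real.log_le_log (Real.exp_pos _) hE
  have hD : 1/s ≤ 1 + Real.log (4*δ+1) := by linarith
  have hDpos : 0 < 1 + Real.log (4*δ+1) := lt_of_lt_of_le (by positivity) hD
  rw [ge_iff_le, div_le_iff₀ hDpos]
  have := (div_le_iff₀ hs0).mp hD
  nlinarith
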